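/- Let σ: 𝒜 → ℬ⁺ and τ: ℬ → 𝒞⁺ be non-erasing morphisms between finite alphabets and z ∈ 𝒞^ℤ. If z has τ-representations (ℓ,y) and (ℓ',y') with no common τ-cut, and (k,x), (k',x') are centered σ-representations of y and y' respectively, then (ℓ + |τ(y_{[−k,0)})|, x) and (ℓ' + |τ(y'_{[−k',0)})|, x') are τ∘σ-representations of z with no common τ∘σ-cut. -/

import Mathlib

open scoped BigOperators

namespace Recog

variable {A B C : Type*}

/-- A morphism assigning a word to each letter is non-erasing if every image is nonempty. -/
def NonErasing (σ : A → List B) : Prop := ∀ a, σ a ≠ []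

/-- Apply a morphism letterwise to a finite word, concatenating the images. -/
def wordApply (σ : A → List B) : List A → List B
  | [] => []
  | a :: w => σ a ++ wordApply σ w

/-- Composition of morphisms `τ ∘ σ`. -/
def comp (τ : B → List C) (σ : A → List B) : A → List C := fun a => wordApply τ (σ a)

/-- The `ℓ`-th cutting point of the representation `(0, x)`:
`|σ(x_[0,ℓ))|` for `ℓ ≥ 0` and `-|σ(x_[ℓ,0))|` for `ℓ < 0`. -/
def cut (σ : A → List B) (x : ℤ → A) (ℓ : ℤ) : ℤ :=
  if 0 ≤ ℓ then ∑ i ∈ Finset.range ℓ.toNat, ((σ (x i)).length : ℤ)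
  else -∑ i ∈ Finset.range (-ℓ).toNat, ((σ (x (-(i : ℤ) - 1))).length : ℤ)

/-- `y` is the bi-infinite image `σ(x)`, where `σ(x₀)` starts at position `0`. -/
def IsSubstPt (σ : A → List B) (x : ℤ → A) (y : ℤ → B) : Prop :=
  ∀ (ℓ : ℤ) (j : ℕ) (hj : j < (σ (x ℓ)).length),
    y (cut σ x ℓ + j) = (σ (x ℓ)).get ⟨j, hj⟩

/-- `(k, x)` is a `σ`-representation of `y`, i.e. `y = T^k σ(x)`. -/
def IsRep (σ : A → List B) (y : ℤ → B) (k : ℤ) (x : ℤ → A) : Prop :=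
  IsSubstPt σ x fun n => y (n - k)

/-- `(k, x)` is a centered `σ`-representation of `y`: `y = T^k σ(x)` with `0 ≤ k < |σ(x₀)|`. -/
def IsCenteredRep (σ : A → List B) (y : ℤ → B) (k : ℤ) (x : ℤ → A) : Prop :=
  IsRep σ y k x ∧ 0 ≤ k ∧ k < ((σ (x 0)).length : ℤ)

/-- `y` is aperiodic: `T^p y ≠ y` for all `p ≥ 1`. -/
def Aperiodic (y : ℤ → B) : Prop := ∀ p : ℕ, 1 ≤ p → (fun n => y (n + p)) ≠ y

/-- `y` is periodic: `T^p y = y` for some `p ≥ 1`. -/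
def Periodic (y : ℤ → B) : Prop := ∃ p : ℕ, 1 ≤ p ∧ (fun n => y (n + p)) = y

/-- The set of `σ`-cutting points of the representation `(k, x)`. -/
def cutSet (σ : A → List B) (x : ℤ → A) (k : ℤ) : Set ℤ :=
  {m : ℤ | ∃ ℓ : ℤ, m = cut σ x ℓ - k}

/-- `σ` is recognizable in `X`: every `y` has at most one centered `σ`-representation in `X`. -/
def RecIn (σ : A → List B) (X : Set (ℤ → A)) : Prop :=
  ∀ (y : ℤ → B) (k k' : ℤ) (x x' : ℤ → A), x ∈ X → x' ∈ X →
    IsCenteredRep σ y k x → IsCenteredRep σ y k' x' → k = k' ∧ x = x'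

/-- `σ` is recognizable in `X` for aperiodic points. -/
def RecInAp (σ : A → List B) (X : Set (ℤ → A)) : Prop :=
  ∀ y : ℤ → B, Aperiodic y → ∀ (k k' : ℤ) (x x' : ℤ → A), x ∈ X → x' ∈ X →
    IsCenteredRep σ y k x → IsCenteredRep σ y k' x' → k = k' ∧ x = x'

/-- `σ` is left permutative: the first letters of `σ a` and `σ b` differ for distinct `a, b`. -/
def LeftPermutative (σ : A → List B) : Prop :=
  ∀ a b : A, a ≠ b → (σ a).head? ≠ (σ b).head?

/-- `σ` is right permutative: the last letters of `σ a` and `σ b` differ for distinct `a, b`. -/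
def RightPermutative (σ : A → List B) : Prop :=
  ∀ a b : A, a ≠ b → (σ a).getLast? ≠ (σ b).getLast?

/-- `σ` and `σ'` are rotationally conjugate. -/
def RotConj (σ σ' : A → List B) : Prop :=
  ∃ w : List B, (∀ a, σ a ++ w = w ++ σ' a) ∨ (∀ a, w ++ σ a = σ' a ++ w)

/-- The incidence matrix of `σ`, over `ℚ`: entry `(b, a)` counts occurrences of `b` in `σ a`. -/
noncomputable def incidence (σ : A → List B) [DecidableEq B] : Matrix B A ℚ :=
  Matrix.of fun b a => ((σ a).count b : ℚ)

/-- The finite subword `x_[i, i+m)` of a bi-infinite sequence. -/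
def factor (x : ℤ → A) (i : ℤ) (m : ℕ) : List A := (List.range m).map fun j => x (i + j)

/-- The language of a bi-infinite sequence: the set of its finite subwords. -/
def lang (x : ℤ → A) : Set (List A) := {w | ∃ (i : ℤ) (m : ℕ), w = factor x i m}

/-- `σ` is injective on bi-infinite sequences. -/
def InjZ (σ : A → List B) : Prop :=
  ∀ (x x' : ℤ → A) (y : ℤ → B), IsSubstPt σ x y → IsSubstPt σ x' y → x = x'

/-- Cutting points for one-sided sequences. -/
def cutN (σ : A → List B) (x : ℕ → A) (ℓ : ℕ) : ℕ :=
  ∑ i ∈ Finset.range ℓ, (σ (x i)).length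

/-- `y` is the one-sided image `σ(x)` for `x : ℕ → A`. -/
def IsSubstPtN (σ : A → List B) (x : ℕ → A) (y : ℕ → B) : Prop :=
  ∀ (ℓ j : ℕ) (hj : j < (σ (x ℓ)).length),
    y (cutN σ x ℓ + j) = (σ (x ℓ)).get ⟨j, hj⟩

/-- `σ` is injective on one-sided (right-infinite) sequences. -/
def InjN (σ : A → List B) : Prop :=
  ∀ (x x' : ℕ → A) (y : ℕ → B), IsSubstPtN σ x y → IsSubstPtN σ x' y → x = x'

/-- The total length `⦀σ⦀ = Σ_a |σ a|`. -/
def totalLen (σ : A → List B) [Fintype A] : ℕ := ∑ a, (σ a).length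

/-- `X` is invariant under the two-sided shift. -/
def ShiftInvariant (X : Set (ℤ → A)) : Prop :=
  ∀ x ∈ X, (fun n => x (n + 1)) ∈ X ∧ (fun n => x (n - 1)) ∈ X

/-- The iterate `σ^n` of a substitution, applied to a letter. -/
def iter (σ : A → List A) : ℕ → A → List A
  | 0, a => [a]
  | n + 1, a => wordApply (iter σ n) (σ a)

/-- The language `ℒ_σ` of a substitution: subwords of the `σ^n(a)`. -/
def subLang (σ : A → List A) : Set (List A) := {w | ∃ (n : ℕ) (a : A), w <:+: iter σ n a}

/-- The substitutive shift `X_σ`. -/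
def subX (σ : A → List A) : Set (ℤ → A) := {x | ∀ w ∈ lang x, w ∈ subLang σ}

/-- `σ` is recognizable in the sense of Mossé for `x`. -/
def MosseRec (σ : A → List B) (x : ℤ → A) : Prop :=
  ∃ ℓ : ℕ, ∀ y : ℤ → B, IsSubstPt σ x y →
    ∀ m ∈ cutSet σ x 0, ∀ m' : ℤ,
      factor y (m - ℓ) (2 * ℓ) = factor y (m' - ℓ) (2 * ℓ) → m' ∈ cutSet σ x 0

section Sadic

variable {𝒜 : ℕ → Type*}

/-- `block σ N = σ_[0,N)`, mapping a letter of `𝒜 N` to a word over `𝒜 0`. -/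
def block (σ : ∀ n, 𝒜 (n + 1) → List (𝒜 n)) : ∀ N, 𝒜 N → List (𝒜 0)
  | 0, a => [a]
  | N + 1, a => wordApply (block σ N) (σ N a)

/-- `blockFrom σ n k = σ_[n,n+k)`, mapping a letter of `𝒜 (n+k)` to a word over `𝒜 n`. -/
def blockFrom (σ : ∀ n, 𝒜 (n + 1) → List (𝒜 n)) (n k : ℕ) : 𝒜 (n + k) → List (𝒜 n) :=
  block (𝒜 := fun m => 𝒜 (n + m)) (fun m => σ (n + m)) k

/-- The language `ℒ^(n)_σ` of a directive sequence. -/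
def sadicLang (σ : ∀ n, 𝒜 (n + 1) → List (𝒜 n)) (n : ℕ) : Set (List (𝒜 n)) :=
  {w | ∃ (k : ℕ) (a : 𝒜 (n + k)), 1 ≤ k ∧ w <:+: blockFrom σ n k a}

/-- The shift `X^(n)_σ` of a directive sequence. -/
def sadicX (σ : ∀ n, 𝒜 (n + 1) → List (𝒜 n)) (n : ℕ) : Set (ℤ → 𝒜 n) :=
  {x | ∀ w ∈ lang x, w ∈ sadicLang σ n}

/-- A directive sequence is everywhere growing if `min_a |σ_[0,n)(a)| → ∞`. -/
def EverywhereGrowing (σ : ∀ n, 𝒜 (n + 1) → List (𝒜 n)) : Prop :=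
  ∀ m : ℕ, ∃ N : ℕ, ∀ n ≥ N, ∀ a : 𝒜 n, m ≤ (block σ n a).length

end Sadic

end Recog

/-!
If `(ℓ, y)` is a `τ`-representation of `z` and `(k, x)` a `σ`-representation of `y`, then
`(ℓ - cut τ y (-k), x)` is a `τ ∘ σ`-representation of `z` whose cutting points are the
`τ`-cutting points of `(ℓ, y)` at the indices `cut σ x m - k`. So every `τ ∘ σ`-cut of the lift
is a `τ`-cut, and disjointness of cut sets passes to the lifts. For `0 ≤ k` the offset
`-cut τ y (-k)` is `|τ(y_[-k,0))|`.
-/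

namespace Recog

variable {A B C : Type*}

section Words

@[simp]
lemma wordApply_append (σ : A → List B) (u v : List A) :
    wordApply σ (u ++ v) = wordApply σ u ++ wordApply σ v := by
  induction u with
  | nil => rfl
  | cons a u ih => simp [wordApply, ih]

@[simp]
lemma wordApply_singleton (σ : A → List B) (a : A) : wordApply σ [a] = σ a := by
  simp [wordApply]

@[simp]
lemma length_factor (x : ℤ → A) (i : ℤ) (m : ℕ) : (factor x i m).length = m := by
  simp [factor]

@[simp]
lemma getElem_factor (x : ℤ → A) (i : ℤ) (m j : ℕ) (hj : j < (factor x i m).length) :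
    (factor x i m)[j] = x (i + j) := by
  simp [factor, ← List.map_eq_flatMap]

lemma factor_add (x : ℤ → A) (i : ℤ) (m n : ℕ) :
    factor x i (m + n) = factor x i m ++ factor x (i + m) n := by
  simp [factor, ← List.map_eq_flatMap, List.range_add, add_assoc]

lemma factor_one (x : ℤ → A) (i : ℤ) : factor x i 1 = [x i] := by
  simp [factor]

end Words

section Cuts

@[simp]
lemma cut_zero (σ : A → List B) (x : ℤ → A) : cut σ x 0 = 0 := by
  simp [cut]

lemma cut_succ (σ : A → List B) (x : ℤ → A) (ℓ : ℤ) :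
    cut σ x (ℓ + 1) = cut σ x ℓ + (σ (x ℓ)).length := by
  rcases le_or_gt 0 ℓ with h | h
  · rw [cut, cut, if_pos h, if_pos (by omega), show (ℓ + 1).toNat = ℓ.toNat + 1 by omega,
      Finset.sum_range_succ, Int.toNat_of_nonneg h]
  · rcases (show ℓ = -1 ∨ ℓ < -1 by omega) with rfl | h1
    · simp [cut]
    · rw [cut, cut, if_neg (by omega), if_neg (by omega),
        show (-ℓ).toNat = (-(ℓ + 1)).toNat + 1 by omega, Finset.sum_range_succ,
        show -(((-(ℓ + 1)).toNat : ℕ) : ℤ) - 1 = ℓ by omega]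
      ring

lemma eq_cut_of_succ {σ : A → List B} {x : ℤ → A} {f : ℤ → ℤ} (h0 : f 0 = 0)
    (hsucc : ∀ ℓ, f (ℓ + 1) = f ℓ + (σ (x ℓ)).length) : f = cut σ x := by
  funext ℓ
  induction ℓ using Int.induction_on with
  | zero => simp [h0]
  | succ n ih => rw [hsucc, cut_succ, ih]
  | pred n ih =>
    have hf := hsucc (-n - 1)
    have hc := cut_succ σ x (-n - 1)
    rw [sub_add_cancel] at hf hc
    omega

lemma cut_add_natCast (σ : A → List B) (x : ℤ → A) (m : ℤ) (n : ℕ) :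
    cut σ x (m + n) = cut σ x m + (wordApply σ (factor x m n)).length := by
  induction n with
  | zero => simp [factor, wordApply]
  | succ n ih =>
    rw [Nat.cast_succ, ← add_assoc, cut_succ, ih, factor_add, factor_one]
    simp [add_assoc]

lemma cut_neg_of_nonneg (σ : A → List B) (x : ℤ → A) {k : ℤ} (hk : 0 ≤ k) :
    cut σ x (-k) = -(wordApply σ (factor x (-k) k.toNat)).length := by
  have h := cut_add_natCast σ x (-k) k.toNat
  rw [show -k + (k.toNat : ℤ) = 0 by omega, cut_zero] at h
  omega

lemma cut_shift (σ : A → List B) (x : ℤ → A) (s : ℤ) :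
    cut σ (fun n => x (n + s)) = fun ℓ => cut σ x (ℓ + s) - cut σ x s := by
  refine (eq_cut_of_succ (by simp) fun ℓ => ?_).symm
  rw [add_right_comm, cut_succ]
  ring

end Cuts

section SubstPt

lemma isSubstPt_iff_factor {σ : A → List B} {x : ℤ → A} {y : ℤ → B} :
    IsSubstPt σ x y ↔ ∀ ℓ, factor y (cut σ x ℓ) (σ (x ℓ)).length = σ (x ℓ) := by
  refine ⟨fun h ℓ => List.ext_getElem (by simp) fun j hj _ => ?_, fun h ℓ j hj => ?_⟩
  · simpa using h ℓ j (by simpa using hj)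
  · rw [← getElem_factor y _ _ j (by simpa using hj)]
    exact List.getElem_of_eq (h ℓ) _

lemma IsSubstPt.factor_wordApply {τ : B → List C} {y : ℤ → B} {z : ℤ → C}
    (h : IsSubstPt τ y z) (m : ℤ) (n : ℕ) :
    factor z (cut τ y m) (wordApply τ (factor y m n)).length = wordApply τ (factor y m n) := by
  induction n with
  | zero => simp [factor, wordApply]
  | succ n ih =>
    rw [factor_add, factor_one, wordApply_append, wordApply_singleton, List.length_append,
      factor_add, ih, ← cut_add_natCast, isSubstPt_iff_factor.mp h]

lemma IsSubstPt.shift {σ : A → List B} {x : ℤ → A} {y : ℤ → B} (h : IsSubstPt σ x y) (s : ℤ) :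
    IsSubstPt σ (fun n => x (n + s)) (fun n => y (n + cut σ x s)) := by
  intro ℓ j hj
  convert h (ℓ + s) j hj using 2
  rw [cut_shift]
  ring

lemma IsSubstPt.cut_comp {σ : A → List B} {x : ℤ → A} {y : ℤ → B} (h : IsSubstPt σ x y)
    (τ : B → List C) : cut (comp τ σ) x = fun ℓ => cut τ y (cut σ x ℓ) := by
  refine (eq_cut_of_succ (by simp) fun ℓ => ?_).symm
  rw [cut_succ σ, cut_add_natCast, isSubstPt_iff_factor.mp h ℓ]
  rfl

lemma IsSubstPt.comp {σ : A → List B} {τ : B → List C} {x : ℤ → A} {y : ℤ → B} {z : ℤ → C}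
    (hx : IsSubstPt σ x y) (hy : IsSubstPt τ y z) : IsSubstPt (comp τ σ) x z := by
  refine isSubstPt_iff_factor.mpr fun ℓ => ?_
  rw [hx.cut_comp τ]
  have := hy.factor_wordApply (cut σ x ℓ) (σ (x ℓ)).length
  rwa [isSubstPt_iff_factor.mp hx ℓ] at this

end SubstPt

section Rep

variable {σ : A → List B} {τ : B → List C} {z : ℤ → C} {ℓ k : ℤ} {y : ℤ → B} {x : ℤ → A}

lemma IsRep.cutSet_comp_subset (hx : IsRep σ y k x) :
    cutSet (comp τ σ) x (ℓ - cut τ y (-k)) ⊆ cutSet τ y ℓ := by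
  rintro _ ⟨m, rfl⟩
  refine ⟨cut σ x m + -k, ?_⟩
  simp only [IsSubstPt.cut_comp hx τ, sub_eq_add_neg, cut_shift]
  ring

lemma IsRep.comp (hy : IsRep τ z ℓ y) (hx : IsRep σ y k x) :
    IsRep (comp τ σ) z (ℓ - cut τ y (-k)) x := by
  refine IsSubstPt.comp (y := fun n => y (n + -k)) hx ?_
  simpa [sub_sub_eq_add_sub, sub_add_eq_add_sub] using hy.shift (-k)

end Rep

end Recog

open Recog in
theorem stmt18_general {A B C : Type*}
    (σ : A → List B) (τ : B → List C)
    (z : ℤ → C) (ℓ ℓ' : ℤ) (y y' : ℤ → B)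
    (hy : IsRep τ z ℓ y) (hy' : IsRep τ z ℓ' y')
    (hdisj : cutSet τ y ℓ ∩ cutSet τ y' ℓ' = ∅)
    (k k' : ℤ) (x x' : ℤ → A)
    (hx : IsCenteredRep σ y k x) (hx' : IsCenteredRep σ y' k' x') :
    IsRep (comp τ σ) z (ℓ + ((wordApply τ (factor y (-k) k.toNat)).length : ℤ)) x ∧
    IsRep (comp τ σ) z (ℓ' + ((wordApply τ (factor y' (-k') k'.toNat)).length : ℤ)) x' ∧
    cutSet (comp τ σ) x (ℓ + ((wordApply τ (factor y (-k) k.toNat)).length : ℤ)) ∩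
      cutSet (comp τ σ) x' (ℓ' + ((wordApply τ (factor y' (-k') k'.toNat)).length : ℤ)) =
        ∅ := by
  obtain ⟨hx : IsRep σ y k x, hk, -⟩ := hx
  obtain ⟨hx' : IsRep σ y' k' x', hk', -⟩ := hx'
  simp only [← sub_neg_eq_add, ← cut_neg_of_nonneg _ _ hk, ← cut_neg_of_nonneg _ _ hk']
  refine ⟨hy.comp hx, hy'.comp hx', Set.subset_empty_iff.mp ?_⟩
  exact hdisj ▸ Set.inter_subset_inter hx.cutSet_comp_subset hx'.cutSet_comp_subset

open Recog in
/-- τ-representations of `z` with no common τ-cut lift through centered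
σ-representations to τ∘σ-representations of `z` with no common τ∘σ-cut. -/
theorem stmt18 {A B C : Type*} [Fintype A] [Fintype B] [Fintype C]
    (σ : A → List B) (τ : B → List C) (hσ : NonErasing σ) (hτ : NonErasing τ)
    (z : ℤ → C) (ℓ ℓ' : ℤ) (y y' : ℤ → B)
    (hy : IsRep τ z ℓ y) (hy' : IsRep τ z ℓ' y')
    (hdisj : cutSet τ y ℓ ∩ cutSet τ y' ℓ' = ∅)
    (k k' : ℤ) (x x' : ℤ → A)
    (hx : IsCenteredRep σ y k x) (hx' : IsCenteredRep σ y' k' x') :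
    IsRep (comp τ σ) z (ℓ + ((wordApply τ (factor y (-k) k.toNat)).length : ℤ)) x ∧
    IsRep (comp τ σ) z (ℓ' + ((wordApply τ (factor y' (-k') k'.toNat)).length : ℤ)) x' ∧
    cutSet (comp τ σ) x (ℓ + ((wordApply τ (factor y (-k) k.toNat)).length : ℤ)) ∩
      cutSet (comp τ σ) x' (ℓ' + ((wordApply τ (factor y' (-k') k'.toNat)).length : ℤ)) =
        ∅ :=
  stmt18_general σ τ z ℓ ℓ' y y' hy hy' hdisj k k' x x' hx hx'
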